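/- In the polynomial ring A = 𝔽₂[ξ₁, ξ₂, ξ₃, …] with conjugate generators ζₙ, the elements ζ₁², ζ₂, ζ₃, … are algebraically independent over 𝔽₂; let θ be the unique 𝔽₂-algebra homomorphism from the subalgebra 𝔽₂[ζ₁², ζ₂, ζ₃, …] ⊆ A to A[y] with θ(ζ₁²) = ζ₁² + y and θ(ζⱼ) = ζⱼ + ζ_{j−1}·y^{2^{j−2}} for all j ≥ 2. Define elements of A[y, ρ] by X₀ = ρ, X₁ = ρ·ξ₁, and Xₘ = Σ_{i=0}^{m−1} Xᵢ·θ(ζ_{m−i}^{2^i}) for m ≥ 2 (note each ζ_{m−i}^{2^i} with 0 ≤ i ≤ m−1 lies in 𝔽₂[ζ₁², ζ₂, ζ₃, …]). Then Xₘ = ρ·ξₘ for every m ≥ 0. -/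
import Mathlib

/-!
STATEMENT 3: In `A = 𝔽₂[ξ₁, ξ₂, …]` with conjugate generators `ζₙ`, the elements
`ζ₁², ζ₂, ζ₃, …` are algebraically independent; letting `θ` be the algebra map on the
subalgebra they generate with `θ(ζ₁²) = ζ₁² + y` and `θ(ζⱼ) = ζⱼ + ζ_{j−1}·y^{2^{j−2}}`
(`j ≥ 2`), the classes `X₀ = ρ`, `X₁ = ρξ₁`, `Xₘ = Σ_{i=0}^{m−1} Xᵢ·θ(ζ_{m−i}^{2^i})`
satisfy `Xₘ = ρ·ξₘ` for all `m`.

Here `A = MvPolynomial ℕ (ZMod 2)` with variable `X i = ξ_{i+1}` (and `ξ₀ = 1`), the target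
`A[y, ρ]` is `MvPolynomial (Fin 2) A` with `y = X 0` and `ρ = X 1`, and `g` enumerates the
generators `ζ₁², ζ₂, ζ₃, …` of the subalgebra.
-/

open MvPolynomial

noncomputable section

abbrev A3 := MvPolynomial ℕ (ZMod 2)

/-- `xiA 0 = 1` (the convention `ξ₀ = 1`) and `xiA (i+1)` is the variable `ξ_{i+1}`. -/
def xiA : ℕ → A3
  | 0 => 1
  | i + 1 => X i

section Aux

lemma surj_endo_inj {R : Type*} [CommRing R] [IsNoetherianRing R]
    (f : R →+* R) (hf : Function.Surjective f) : Function.Injective f := by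
  rw [RingHom.injective_iff_ker_eq_bot, RingHom.ker_eq_bot_iff_eq_zero]
  have hcoe : ∀ n : ℕ, ⇑(f ^ n) = (⇑f)^[n] := fun n => by
    induction n with
    | zero => rfl
    | succ n ih => rw [pow_succ', RingHom.coe_mul, ih, Function.iterate_succ']
  have hmono : Monotone fun n => RingHom.ker (f ^ n) := by
    apply monotone_nat_of_le_succ
    intro n x hx
    have hx' : (f ^ n) x = 0 := hx
    have : (f ^ (n + 1)) x = 0 := by
      rw [pow_succ', RingHom.coe_mul, Function.comp_apply, hx', map_zero]
    exact this
  obtain ⟨n, hn⟩ := monotone_stabilizes_iff_noetherian.2 inferInstance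
    ⟨fun n => RingHom.ker (f ^ n), hmono⟩
  intro x hx
  obtain ⟨y, hy⟩ : ∃ y, (f ^ n) y = x := by
    have : Function.Surjective ⇑(f ^ n) := by
      rw [hcoe]; exact Function.Surjective.iterate hf n
    exact this x
  have hy1 : y ∈ RingHom.ker (f ^ (n + 1)) := by
    have : (f ^ (n + 1)) y = 0 := by
      rw [pow_succ', RingHom.coe_mul, Function.comp_apply, hy, hx]
    exact this
  have hy0 : y ∈ RingHom.ker (f ^ n) := by
    have h2 : RingHom.ker (f ^ n) = RingHom.ker (f ^ (n + 1)) := hn (n + 1) (Nat.le_succ n)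
    rw [h2]; exact hy1
  rw [← hy]; exact hy0

lemma sigma_mk_eq {a b c d : ℕ} (h1 : a = c) (h2 : b = d) :
    (⟨a, b⟩ : Σ _ : ℕ, ℕ) = ⟨c, d⟩ := by subst h1; subst h2; rfl

variable (zeta : ℕ → A3) (hz0 : zeta 0 = 1)
  (hzS : ∀ n : ℕ, zeta (n + 1) =
      ∑ j ∈ Finset.range (n + 1), xiA (n + 1 - j) ^ 2 ^ j * zeta j)

include hz0 hzS

/-- each `zeta (n+1)` only uses variables `< N` when `n < N` -/
lemma zeta_mem_range_rename (N : ℕ) : ∀ n, n < N →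
    zeta (n + 1) ∈ (rename ((↑) : Fin N → ℕ) :
      MvPolynomial (Fin N) (ZMod 2) →ₐ[ZMod 2] A3).range := by
  intro n
  induction n using Nat.strong_induction_on with
  | _ n ih =>
    intro hn
    rw [hzS n]
    apply Subalgebra.sum_mem
    intro j hj
    rw [Finset.mem_range] at hj
    apply Subalgebra.mul_mem
    · apply Subalgebra.pow_mem
      have h1 : n + 1 - j = (n - j) + 1 := by omega
      rw [h1]
      show X (n - j) ∈ _
      exact ⟨X ⟨n - j, by omega⟩, by simp⟩
    · rcases j with _ | j
      · rw [hz0]; exact one_mem _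
      · exact ih j (by omega) (by omega)

/-- each variable is in the adjoin of the first `N` zetas -/
lemma X_mem_adjoin_zeta (N : ℕ) : ∀ n, n < N →
    (X n : A3) ∈ Algebra.adjoin (ZMod 2) (Set.range fun j : Fin N => zeta (j + 1)) := by
  intro n
  induction n using Nat.strong_induction_on with
  | _ n ih =>
    intro hn
    have h := hzS n
    rw [Finset.sum_range_succ'] at h
    have h0 : xiA (n + 1 - 0) ^ 2 ^ 0 * zeta 0 = X n := by
      simp [xiA, hz0]
    rw [h0] at h
    have hX : (X n : A3) = zeta (n + 1) -
        ∑ j ∈ Finset.range n, xiA (n + 1 - (j + 1)) ^ 2 ^ (j + 1) * zeta (j + 1) := by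
      rw [h]; ring
    rw [hX]
    apply Subalgebra.sub_mem
    · exact Algebra.subset_adjoin ⟨⟨n, hn⟩, rfl⟩
    · apply Subalgebra.sum_mem
      intro j hj
      rw [Finset.mem_range] at hj
      apply Subalgebra.mul_mem
      · apply Subalgebra.pow_mem
        have h1 : n + 1 - (j + 1) = (n - j - 1) + 1 := by omega
        rw [h1]
        show (X (n - j - 1) : A3) ∈ _
        exact ih (n - j - 1) (by omega) (by omega)
      · exact Algebra.subset_adjoin ⟨⟨j, by omega⟩, rfl⟩

lemma zetaN_indep (N : ℕ) :
    AlgebraicIndependent (ZMod 2) (fun j : Fin N => zeta (j + 1)) := by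
  classical
  set r : MvPolynomial (Fin N) (ZMod 2) →ₐ[ZMod 2] A3 :=
    rename ((↑) : Fin N → ℕ) with hr
  have hrinj : Function.Injective r := rename_injective _ Fin.val_injective
  have hmem := zeta_mem_range_rename zeta hz0 hzS N
  choose Z hZ using fun j : Fin N => hmem j j.2
  have hadj : Algebra.adjoin (ZMod 2) (Set.range Z) = ⊤ := by
    rw [eq_top_iff, ← MvPolynomial.adjoin_range_X, Algebra.adjoin_le_iff]
    rintro _ ⟨j, rfl⟩
    have hXj : (X (j : ℕ) : A3) ∈
        Algebra.adjoin (ZMod 2) (Set.range fun j : Fin N => zeta (j + 1)) :=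
      X_mem_adjoin_zeta zeta hz0 hzS N j j.2
    have himg : (Algebra.adjoin (ZMod 2) (Set.range fun j : Fin N => zeta (j + 1)))
        = (Algebra.adjoin (ZMod 2) (Set.range Z)).map r := by
      rw [AlgHom.map_adjoin, ← Set.range_comp]
      have hcz : (⇑r ∘ Z) = (fun j : Fin N => zeta (j + 1)) := funext fun j => hZ j
      rw [hcz]
    rw [himg] at hXj
    obtain ⟨w, hw, hweq⟩ := hXj
    have : w = X j := hrinj (by rw [show (r w : A3) = X (j : ℕ) from hweq]; simp [hr])
    rwa [← this]
  have hsurj : Function.Surjective (aeval Z :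
      MvPolynomial (Fin N) (ZMod 2) →ₐ[ZMod 2] MvPolynomial (Fin N) (ZMod 2)) := by
    rw [← AlgHom.range_eq_top, ← Algebra.adjoin_range_eq_range_aeval, hadj]
  have hinj : Function.Injective (aeval Z :
      MvPolynomial (Fin N) (ZMod 2) →ₐ[ZMod 2] MvPolynomial (Fin N) (ZMod 2)) :=
    surj_endo_inj (aeval Z : MvPolynomial (Fin N) (ZMod 2) →ₐ[ZMod 2]
      MvPolynomial (Fin N) (ZMod 2)).toRingHom hsurj
  have hZind : AlgebraicIndependent (ZMod 2) Z :=
    algebraicIndependent_iff_injective_aeval.2 hinj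
  have := hZind.map (f := r) (Set.injOn_of_injective hrinj)
  convert this using 1
  funext j
  exact (hZ j).symm

lemma zsucc_inj : Function.Injective
    (aeval (fun n => zeta (n + 1)) : MvPolynomial ℕ (ZMod 2) →ₐ[ZMod 2] A3) := by
  rw [injective_iff_map_eq_zero]
  intro p hp
  obtain ⟨n, fv, hfvinj, q, rfl⟩ := MvPolynomial.exists_fin_rename p
  rw [aeval_rename] at hp
  set N : ℕ := (Finset.univ : Finset (Fin n)).sup fv + 1 with hN
  have hlt : ∀ i, fv i < N := fun i =>
    Nat.lt_succ_of_le (Finset.le_sup (Finset.mem_univ i))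
  set fv' : Fin n → Fin N := fun i => ⟨fv i, hlt i⟩ with hfv'
  have hfv'inj : Function.Injective fv' := by
    intro a b hab
    apply hfvinj
    have := congrArg Fin.val hab
    exact this
  have hind := (zetaN_indep zeta hz0 hzS N).comp fv' hfv'inj
  have heq : ((fun n => zeta (n + 1)) ∘ fv) = ((fun j : Fin N => zeta (j + 1)) ∘ fv') := rfl
  rw [heq] at hp
  have hq : q = 0 := (injective_iff_map_eq_zero _).1 hind q hp
  rw [hq, map_zero]

lemma g_indep (g : ℕ → A3) (hg0 : g 0 = zeta 1 ^ 2) (hgS : ∀ i : ℕ, g (i + 1) = zeta (i + 2)) :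
    AlgebraicIndependent (ZMod 2) g := by
  classical
  set F : ℕ → Polynomial (ZMod 2) := fun n => if n = 0 then Polynomial.X ^ 2 else Polynomial.X
    with hF
  have hFt : ∀ i, Transcendental (ZMod 2) (F i) := by
    intro i
    rcases i with _ | i
    · simpa [hF] using (Polynomial.transcendental_X (ZMod 2)).pow (n := 2) (by norm_num)
    · simpa [hF] using Polynomial.transcendental_X (ZMod 2)
  have hu : AlgebraicIndependent (ZMod 2)
      (fun i => Polynomial.aeval (X i : A3) (F i)) :=
    MvPolynomial.algebraicIndependent_polynomial_aeval_X (f := F) (hf := hFt)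
  have huinj : Function.Injective
      (aeval (fun i => Polynomial.aeval (X i : A3) (F i)) :
        MvPolynomial ℕ (ZMod 2) →ₐ[ZMod 2] A3) :=
    algebraicIndependent_iff_injective_aeval.1 hu
  have hcomp : (aeval g : MvPolynomial ℕ (ZMod 2) →ₐ[ZMod 2] A3)
      = (aeval (fun n => zeta (n + 1))).comp
        (aeval (fun i => Polynomial.aeval (X i : A3) (F i))) := by
    apply MvPolynomial.algHom_ext
    intro i
    rcases i with _ | i
    · simp [hF, hg0, map_pow]
    · simp [hF, hgS]
  apply algebraicIndependent_iff_injective_aeval.2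
  rw [hcomp, AlgHom.coe_comp]
  exact (zsucc_inj zeta hz0 hzS).comp huinj

omit hz0 in
lemma hv_lemma : ∀ m : ℕ, 1 ≤ m →
    ∑ j ∈ Finset.range (m + 1), xiA (m - j) ^ 2 ^ j * zeta j = 0 := by
  rintro (_ | n) hm
  · omega
  · rw [Finset.sum_range_succ]
    have h1 : xiA (n + 1 - (n + 1)) ^ 2 ^ (n + 1) * zeta (n + 1) = zeta (n + 1) := by
      simp [xiA]
    rw [h1, ← hzS n]
    exact CharTwo.add_self_eq_zero _

lemma anti_lemma : ∀ m : ℕ, 1 ≤ m →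
    ∑ i ∈ Finset.range (m + 1), xiA i * zeta (m - i) ^ 2 ^ i = 0 := by
  intro m
  induction m using Nat.strong_induction_on with
  | _ m ih =>
    intro hm
    have hinner : ∀ a ∈ Finset.range (m + 1),
        (∑ b ∈ Finset.range (m + 1 - a),
          xiA a * (zeta b ^ 2 ^ a * xiA (m - a - b) ^ 2 ^ (a + b)))
        = if a = m then xiA m else 0 := by
      intro a ha
      rw [Finset.mem_range] at ha
      have h1 : m + 1 - a = (m - a) + 1 := by omega
      have h2 : ∑ b ∈ Finset.range (m + 1 - a),
          xiA a * (zeta b ^ 2 ^ a * xiA (m - a - b) ^ 2 ^ (a + b))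
          = xiA a * (∑ b ∈ Finset.range ((m - a) + 1),
              zeta b * xiA (m - a - b) ^ 2 ^ b) ^ 2 ^ a := by
        rw [← Finset.mul_sum, sum_pow_char_pow]
        congr 1
        rw [h1]
        apply Finset.sum_congr rfl
        intro b hb
        rw [mul_pow, ← pow_mul, ← pow_add, Nat.add_comm a b]
      rw [h2]
      by_cases ham : a = m
      · subst ham
        simp [hz0, xiA]
      · have hma : 1 ≤ m - a := by omega
        have h3 : ∑ b ∈ Finset.range ((m - a) + 1), zeta b * xiA (m - a - b) ^ 2 ^ b = 0 := by
          rw [← hv_lemma zeta hzS (m - a) hma]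
          apply Finset.sum_congr rfl
          intro b _
          ring
        rw [h3, zero_pow (by positivity), mul_zero, if_neg ham]
    have hS1 : ∑ a ∈ Finset.range (m + 1), ∑ b ∈ Finset.range (m + 1 - a),
        xiA a * (zeta b ^ 2 ^ a * xiA (m - a - b) ^ 2 ^ (a + b)) = xiA m := by
      rw [Finset.sum_congr rfl hinner, Finset.sum_ite_eq' (Finset.range (m + 1)) m fun _ => xiA m,
        if_pos (Finset.self_mem_range_succ m)]
    have hS2 : ∑ a ∈ Finset.range (m + 1), ∑ b ∈ Finset.range (m + 1 - a),
        xiA a * (zeta b ^ 2 ^ a * xiA (m - a - b) ^ 2 ^ (a + b))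
        = ∑ k ∈ Finset.range (m + 1),
            (∑ i ∈ Finset.range (k + 1), xiA i * zeta (k - i) ^ 2 ^ i) * xiA (m - k) ^ 2 ^ k := by
      rw [Finset.sum_sigma' (Finset.range (m + 1)) (fun a => Finset.range (m + 1 - a))
          (fun a b => xiA a * (zeta b ^ 2 ^ a * xiA (m - a - b) ^ 2 ^ (a + b)))]
      have hrhs : ∀ k ∈ Finset.range (m + 1),
          (∑ i ∈ Finset.range (k + 1), xiA i * zeta (k - i) ^ 2 ^ i) * xiA (m - k) ^ 2 ^ k
          = ∑ i ∈ Finset.range (k + 1),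
              xiA i * (zeta (k - i) ^ 2 ^ i * xiA (m - k) ^ 2 ^ k) := by
        intro k _
        rw [Finset.sum_mul]
        apply Finset.sum_congr rfl
        intro i _
        ring
      rw [Finset.sum_congr rfl hrhs,
        Finset.sum_sigma' (Finset.range (m + 1)) (fun k => Finset.range (k + 1))
          (fun k i => xiA i * (zeta (k - i) ^ 2 ^ i * xiA (m - k) ^ 2 ^ k))]
      apply Finset.sum_nbij' (i := fun p : Σ _ : ℕ, ℕ => (⟨p.1 + p.2, p.1⟩ : Σ _ : ℕ, ℕ))
        (j := fun p : Σ _ : ℕ, ℕ => (⟨p.2, p.1 - p.2⟩ : Σ _ : ℕ, ℕ))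
      · intro p hp
        simp only [Finset.mem_sigma, Finset.mem_range] at hp ⊢
        omega
      · intro p hp
        simp only [Finset.mem_sigma, Finset.mem_range] at hp ⊢
        omega
      · rintro ⟨a, b⟩ hp
        simp only [Finset.mem_sigma, Finset.mem_range] at hp
        exact sigma_mk_eq rfl (by show a + b - a = b; omega)
      · rintro ⟨k, i⟩ hp
        simp only [Finset.mem_sigma, Finset.mem_range] at hp
        exact sigma_mk_eq (by show i + (k - i) = k; omega) rfl
      · rintro ⟨a, b⟩ hp
        simp only [Finset.mem_sigma, Finset.mem_range] at hp
        show xiA a * (zeta b ^ 2 ^ a * xiA (m - a - b) ^ 2 ^ (a + b))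
          = xiA a * (zeta (a + b - a) ^ 2 ^ a * xiA (m - (a + b)) ^ 2 ^ (a + b))
        have h1 : a + b - a = b := by omega
        have h2 : m - a - b = m - (a + b) := by omega
        rw [h1, h2]
    have hkey : ∑ k ∈ Finset.range (m + 1),
        (∑ i ∈ Finset.range (k + 1), xiA i * zeta (k - i) ^ 2 ^ i) * xiA (m - k) ^ 2 ^ k
        = xiA m := by rw [← hS2, hS1]
    rw [Finset.sum_range_succ] at hkey
    have hlast : (∑ i ∈ Finset.range (m + 1), xiA i * zeta (m - i) ^ 2 ^ i) * xiA (m - m) ^ 2 ^ m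
        = ∑ i ∈ Finset.range (m + 1), xiA i * zeta (m - i) ^ 2 ^ i := by
      simp [xiA, Nat.sub_self]
    rw [hlast] at hkey
    have hrest : ∑ k ∈ Finset.range m,
        (∑ i ∈ Finset.range (k + 1), xiA i * zeta (k - i) ^ 2 ^ i) * xiA (m - k) ^ 2 ^ k
        = xiA m := by
      have hterm : ∀ k ∈ Finset.range m,
          (∑ i ∈ Finset.range (k + 1), xiA i * zeta (k - i) ^ 2 ^ i) * xiA (m - k) ^ 2 ^ k
          = if k = 0 then xiA m else 0 := by
        intro k hk
        rw [Finset.mem_range] at hk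
        rcases k with _ | k
        · simp [hz0, xiA]
        · rw [ih (k + 1) (by omega) (by omega), zero_mul, if_neg (by omega)]
      rw [Finset.sum_congr rfl hterm, Finset.sum_ite_eq' (Finset.range m) 0 fun _ => xiA m,
        if_pos (Finset.mem_range.2 (by omega))]
    rw [hrest] at hkey
    rwa [add_eq_left] at hkey

end Aux

theorem stmt_3
    (zeta : ℕ → A3) (hz0 : zeta 0 = 1)
    (hzS : ∀ n : ℕ, zeta (n + 1) =
      ∑ j ∈ Finset.range (n + 1), xiA (n + 1 - j) ^ 2 ^ j * zeta j)
    (g : ℕ → A3) (hg0 : g 0 = zeta 1 ^ 2) (hgS : ∀ i : ℕ, g (i + 1) = zeta (i + 2)) :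
    AlgebraicIndependent (ZMod 2) g ∧
    ∀ (hmem : ∀ k i : ℕ, (k = 1 → 1 ≤ i) →
        zeta k ^ 2 ^ i ∈ Algebra.adjoin (ZMod 2) (Set.range g))
      (θ : ↥(Algebra.adjoin (ZMod 2) (Set.range g)) →ₐ[ZMod 2] MvPolynomial (Fin 2) A3),
      θ ⟨zeta 1 ^ 2, by rw [← hg0]; exact Algebra.subset_adjoin ⟨0, rfl⟩⟩
          = C (zeta 1 ^ 2) + X 0 →
      (∀ j : ℕ,
        θ ⟨zeta (j + 2), by rw [← hgS j]; exact Algebra.subset_adjoin ⟨j + 1, rfl⟩⟩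
          = C (zeta (j + 2)) + C (zeta (j + 1)) * X 0 ^ 2 ^ j) →
      ∀ Xc : ℕ → MvPolynomial (Fin 2) A3,
        Xc 0 = X 1 →
        Xc 1 = X 1 * C (xiA 1) →
        (∀ (m : ℕ) (_hm : 2 ≤ m),
          Xc m = ∑ i ∈ Finset.range m,
            Xc i * θ ⟨zeta (m - i) ^ 2 ^ i, hmem (m - i) i (by omega)⟩) →
        ∀ m : ℕ, Xc m = X 1 * C (xiA m) := by
  constructor
  · exact g_indep zeta hz0 hzS g hg0 hgS
  intro hmem θ hθ1 hθ2 Xc hX0 hX1 hrec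
  have hmem1 : zeta 1 ^ 2 ∈ Algebra.adjoin (ZMod 2) (Set.range g) := by
    rw [← hg0]; exact Algebra.subset_adjoin ⟨0, rfl⟩
  have hmem2 : ∀ j : ℕ, zeta (j + 2) ∈ Algebra.adjoin (ZMod 2) (Set.range g) := fun j => by
    rw [← hgS j]; exact Algebra.subset_adjoin ⟨j + 1, rfl⟩
  have key : ∀ k i : ℕ, 1 ≤ k → (k = 1 → 1 ≤ i) →
      ∀ hin : zeta k ^ 2 ^ i ∈ Algebra.adjoin (ZMod 2) (Set.range g),
      θ ⟨zeta k ^ 2 ^ i, hin⟩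
        = C (zeta k ^ 2 ^ i) + C (zeta (k - 1) ^ 2 ^ i) * X 0 ^ 2 ^ (k + i - 2) := by
    intro k i hk h1 hin
    match k, hk, h1, hin with
    | 1, _, h1, hin =>
      have hi : 1 ≤ i := h1 rfl
      obtain ⟨i', rfl⟩ : ∃ i', i = i' + 1 := ⟨i - 1, by omega⟩
      have e1 : (⟨zeta 1 ^ 2 ^ (i' + 1), hin⟩ :
          Algebra.adjoin (ZMod 2) (Set.range g)) = ⟨zeta 1 ^ 2, hmem1⟩ ^ 2 ^ i' := by
        apply Subtype.ext
        rw [SubmonoidClass.coe_pow]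
        show zeta 1 ^ 2 ^ (i' + 1) = (zeta 1 ^ 2) ^ 2 ^ i'
        rw [← pow_mul]
        congr 1
        rw [pow_succ]; ring
      rw [e1, map_pow, hθ1, add_pow_char_pow, ← map_pow, ← pow_mul]
      have h2 : 2 * 2 ^ i' = 2 ^ (i' + 1) := by rw [pow_succ]; ring
      rw [h2]
      have h3 : 1 + (i' + 1) - 2 = i' := by omega
      rw [h3, hz0, one_pow, map_one, one_mul]
    | (j + 2), _, _, hin =>
      have e2 : (⟨zeta (j + 2) ^ 2 ^ i, hin⟩ :
          Algebra.adjoin (ZMod 2) (Set.range g)) = ⟨zeta (j + 2), hmem2 j⟩ ^ 2 ^ i := by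
        apply Subtype.ext
        rw [SubmonoidClass.coe_pow]
      rw [e2, map_pow, hθ2 j, add_pow_char_pow, mul_pow, ← map_pow, ← map_pow,
        ← pow_mul, ← pow_add]
      have h4 : j + 2 + i - 2 = j + i := by omega
      have h5 : j + 2 - 1 = j + 1 := rfl
      rw [h4, h5]
  have anti := anti_lemma zeta hz0 hzS
  intro m
  induction m using Nat.strong_induction_on with
  | _ m ih =>
    match m, ih with
    | 0, _ => rw [hX0]; simp [xiA]
    | 1, _ => exact hX1
    | (n + 2), ih =>
      rw [hrec (n + 2) (by omega)]
      have hterm : ∀ i ∈ Finset.range (n + 2),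
          Xc i * θ ⟨zeta (n + 2 - i) ^ 2 ^ i, hmem (n + 2 - i) i (by omega)⟩
          = X 1 * C (xiA i * zeta (n + 2 - i) ^ 2 ^ i)
            + (X 1 * X 0 ^ 2 ^ n) * C (xiA i * zeta (n + 1 - i) ^ 2 ^ i) := by
        intro i hi
        rw [Finset.mem_range] at hi
        rw [ih i (by omega), key (n + 2 - i) i (by omega) (by omega)
          (hmem (n + 2 - i) i (by omega))]
        have h6 : n + 2 - i + i - 2 = n := by omega
        have h7 : n + 2 - i - 1 = n + 1 - i := by omega
        rw [h6, h7, map_mul, map_mul]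
        ring
      rw [Finset.sum_congr rfl hterm, Finset.sum_add_distrib, ← Finset.mul_sum,
        ← Finset.mul_sum, ← map_sum, ← map_sum]
      have hsum1 : ∑ i ∈ Finset.range (n + 2), xiA i * zeta (n + 2 - i) ^ 2 ^ i
          = xiA (n + 2) := by
        have h := anti (n + 2) (by omega)
        rw [Finset.sum_range_succ] at h
        have h8 : xiA (n + 2) * zeta (n + 2 - (n + 2)) ^ 2 ^ (n + 2) = xiA (n + 2) := by
          simp [hz0, Nat.sub_self]
        rw [h8] at h
        calc ∑ i ∈ Finset.range (n + 2), xiA i * zeta (n + 2 - i) ^ 2 ^ i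
            = ∑ i ∈ Finset.range (n + 2), xiA i * zeta (n + 2 - i) ^ 2 ^ i
              + xiA (n + 2) + xiA (n + 2) := by
              rw [add_assoc, CharTwo.add_self_eq_zero, add_zero]
          _ = 0 + xiA (n + 2) := by rw [h]
          _ = xiA (n + 2) := zero_add _
      have hsum2 : ∑ i ∈ Finset.range (n + 2), xiA i * zeta (n + 1 - i) ^ 2 ^ i = 0 := by
        have h := anti (n + 1) (by omega)
        exact h
      rw [hsum1, hsum2, map_zero, mul_zero, add_zero]

end
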